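/- arXiv:1905.10613 — 2 statements merged into one kernel-verified Lean document; each statement's English description precedes it below -/
import Mathlib

section
/- Define a linear endomorphism τ₊ of the 28-dimensional space spanned by {e_ie_j : 1 ≤ i < j ≤ 8} by the explicit formulas τ₊(e₁e₂) = ½(e₁e₂ + e₃e₄ + e₅e₆ + e₇e₈), τ₊(e₁e₃) = ½(e₁e₃ - e₂e₄ + e₅e₇ - e₆e₈), …, τ₊(e₇e₈) = ½(e₁e₂ - e₃e₄ - e₅e₆ + e₇e₈) (the full 28-entry table from the paper). Then τ₊² = Id, its +1-eigenspace has dimension 21 and its -1-eigenspace has dimension 7. -/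
noncomputable section

/-- Index set for the basis {e_ie_j : 1 ≤ i < j ≤ 8} of the 28-dimensional space of
bivectors in Cl₈⁰ (equivalently 𝔰𝔭𝔦𝔫(8)); here pairs are 0-indexed, so (i,j) with
i < j corresponds to the bivector e_{i+1}e_{j+1}. -/
abbrev BivIdx := {q : Fin 8 × Fin 8 // q.1 < q.2}

/-- The table of τ₊ (the lift τ_* of κ⁺₈ from the paper), 1-indexed: the row (i,j) lists
the bivectors e_ae_b appearing in 2·τ₊(e_ie_j) with their signs. -/
def tauTable : ℕ × ℕ → List ((ℕ × ℕ) × ℝ) := fun p =>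
  match p with
  | (1,2) => [((1,2),1),((3,4),1),((5,6),1),((7,8),1)]
  | (1,3) => [((1,3),1),((2,4),-1),((5,7),1),((6,8),-1)]
  | (1,4) => [((1,4),1),((2,3),1),((5,8),-1),((6,7),-1)]
  | (1,5) => [((1,5),1),((2,6),-1),((3,7),-1),((4,8),1)]
  | (1,6) => [((1,6),1),((2,5),1),((3,8),1),((4,7),1)]
  | (1,7) => [((1,7),1),((2,8),-1),((3,5),1),((4,6),-1)]
  | (1,8) => [((1,8),1),((2,7),1),((3,6),-1),((4,5),-1)]
  | (2,3) => [((1,4),1),((2,3),1),((5,8),1),((6,7),1)]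
  | (2,4) => [((1,3),-1),((2,4),1),((5,7),1),((6,8),-1)]
  | (2,5) => [((1,6),1),((2,5),1),((3,8),-1),((4,7),-1)]
  | (2,6) => [((1,5),-1),((2,6),1),((3,7),-1),((4,8),1)]
  | (2,7) => [((1,8),1),((2,7),1),((3,6),1),((4,5),1)]
  | (2,8) => [((1,7),-1),((2,8),1),((3,5),1),((4,6),-1)]
  | (3,4) => [((1,2),1),((3,4),1),((5,6),-1),((7,8),-1)]
  | (3,5) => [((1,7),1),((2,8),1),((3,5),1),((4,6),1)]
  | (3,6) => [((1,8),-1),((2,7),1),((3,6),1),((4,5),-1)]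
  | (3,7) => [((1,5),-1),((2,6),-1),((3,7),1),((4,8),1)]
  | (3,8) => [((1,6),1),((2,5),-1),((3,8),1),((4,7),-1)]
  | (4,5) => [((1,8),-1),((2,7),1),((3,6),-1),((4,5),1)]
  | (4,6) => [((1,7),-1),((2,8),-1),((3,5),1),((4,6),1)]
  | (4,7) => [((1,6),1),((2,5),-1),((3,8),-1),((4,7),1)]
  | (4,8) => [((1,5),1),((2,6),1),((3,7),1),((4,8),1)]
  | (5,6) => [((1,2),1),((3,4),-1),((5,6),1),((7,8),-1)]
  | (5,7) => [((1,3),1),((2,4),1),((5,7),1),((6,8),1)]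
  | (5,8) => [((1,4),-1),((2,3),1),((5,8),1),((6,7),-1)]
  | (6,7) => [((1,4),-1),((2,3),1),((5,8),-1),((6,7),1)]
  | (6,8) => [((1,3),-1),((2,4),-1),((5,7),1),((6,8),1)]
  | (7,8) => [((1,2),1),((3,4),-1),((5,6),-1),((7,8),1)]
  | _ => []

/-- The coefficient of e_ae_b (row r) in 2·τ₊(e_ie_j) (column c). -/
def tauCoeff (r c : ℕ × ℕ) : ℝ :=
  ((tauTable c).filter (fun x => x.1 = r)).foldr (fun x acc => acc + x.2) 0

/-- The endomorphism τ₊ of ℝ²⁸ = span{e_ie_j}, as a 28×28 matrix in the ordered basis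
{e₁e₂, e₁e₃, …, e₇e₈}, with entries the halved table coefficients. -/
def tauM : Matrix BivIdx BivIdx ℝ := fun r c =>
  (1 / 2 : ℝ) * tauCoeff ((r.1.1 : ℕ) + 1, (r.1.2 : ℕ) + 1) ((c.1.1 : ℕ) + 1, (c.1.2 : ℕ) + 1)


def tauTableZ : ℕ × ℕ → List ((ℕ × ℕ) × ℤ) := fun p =>
  match p with
  | (1,2) => [((1,2),1),((3,4),1),((5,6),1),((7,8),1)]
  | (1,3) => [((1,3),1),((2,4),-1),((5,7),1),((6,8),-1)]
  | (1,4) => [((1,4),1),((2,3),1),((5,8),-1),((6,7),-1)]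
  | (1,5) => [((1,5),1),((2,6),-1),((3,7),-1),((4,8),1)]
  | (1,6) => [((1,6),1),((2,5),1),((3,8),1),((4,7),1)]
  | (1,7) => [((1,7),1),((2,8),-1),((3,5),1),((4,6),-1)]
  | (1,8) => [((1,8),1),((2,7),1),((3,6),-1),((4,5),-1)]
  | (2,3) => [((1,4),1),((2,3),1),((5,8),1),((6,7),1)]
  | (2,4) => [((1,3),-1),((2,4),1),((5,7),1),((6,8),-1)]
  | (2,5) => [((1,6),1),((2,5),1),((3,8),-1),((4,7),-1)]
  | (2,6) => [((1,5),-1),((2,6),1),((3,7),-1),((4,8),1)]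
  | (2,7) => [((1,8),1),((2,7),1),((3,6),1),((4,5),1)]
  | (2,8) => [((1,7),-1),((2,8),1),((3,5),1),((4,6),-1)]
  | (3,4) => [((1,2),1),((3,4),1),((5,6),-1),((7,8),-1)]
  | (3,5) => [((1,7),1),((2,8),1),((3,5),1),((4,6),1)]
  | (3,6) => [((1,8),-1),((2,7),1),((3,6),1),((4,5),-1)]
  | (3,7) => [((1,5),-1),((2,6),-1),((3,7),1),((4,8),1)]
  | (3,8) => [((1,6),1),((2,5),-1),((3,8),1),((4,7),-1)]
  | (4,5) => [((1,8),-1),((2,7),1),((3,6),-1),((4,5),1)]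
  | (4,6) => [((1,7),-1),((2,8),-1),((3,5),1),((4,6),1)]
  | (4,7) => [((1,6),1),((2,5),-1),((3,8),-1),((4,7),1)]
  | (4,8) => [((1,5),1),((2,6),1),((3,7),1),((4,8),1)]
  | (5,6) => [((1,2),1),((3,4),-1),((5,6),1),((7,8),-1)]
  | (5,7) => [((1,3),1),((2,4),1),((5,7),1),((6,8),1)]
  | (5,8) => [((1,4),-1),((2,3),1),((5,8),1),((6,7),-1)]
  | (6,7) => [((1,4),-1),((2,3),1),((5,8),-1),((6,7),1)]
  | (6,8) => [((1,3),-1),((2,4),-1),((5,7),1),((6,8),1)]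
  | (7,8) => [((1,2),1),((3,4),-1),((5,6),-1),((7,8),1)]
  | _ => []

def tauCoeffZ (r c : ℕ × ℕ) : ℤ :=
  ((tauTableZ c).filter (fun x => x.1 = r)).foldr (fun x acc => acc + x.2) 0

def Mz : Matrix BivIdx BivIdx ℤ := fun r c =>
  tauCoeffZ ((r.1.1 : ℕ) + 1, (r.1.2 : ℕ) + 1) ((c.1.1 : ℕ) + 1, (c.1.2 : ℕ) + 1)

lemma tT12 : tauTable (1,2) = [((1,2),1),((3,4),1),((5,6),1),((7,8),1)] := rfl
lemma tZ12 : tauTableZ (1,2) = [((1,2),1),((3,4),1),((5,6),1),((7,8),1)] := rfl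
lemma tT13 : tauTable (1,3) = [((1,3),1),((2,4),-1),((5,7),1),((6,8),-1)] := rfl
lemma tZ13 : tauTableZ (1,3) = [((1,3),1),((2,4),-1),((5,7),1),((6,8),-1)] := rfl
lemma tT14 : tauTable (1,4) = [((1,4),1),((2,3),1),((5,8),-1),((6,7),-1)] := rfl
lemma tZ14 : tauTableZ (1,4) = [((1,4),1),((2,3),1),((5,8),-1),((6,7),-1)] := rfl
lemma tT15 : tauTable (1,5) = [((1,5),1),((2,6),-1),((3,7),-1),((4,8),1)] := rfl
lemma tZ15 : tauTableZ (1,5) = [((1,5),1),((2,6),-1),((3,7),-1),((4,8),1)] := rfl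
lemma tT16 : tauTable (1,6) = [((1,6),1),((2,5),1),((3,8),1),((4,7),1)] := rfl
lemma tZ16 : tauTableZ (1,6) = [((1,6),1),((2,5),1),((3,8),1),((4,7),1)] := rfl
lemma tT17 : tauTable (1,7) = [((1,7),1),((2,8),-1),((3,5),1),((4,6),-1)] := rfl
lemma tZ17 : tauTableZ (1,7) = [((1,7),1),((2,8),-1),((3,5),1),((4,6),-1)] := rfl
lemma tT18 : tauTable (1,8) = [((1,8),1),((2,7),1),((3,6),-1),((4,5),-1)] := rfl
lemma tZ18 : tauTableZ (1,8) = [((1,8),1),((2,7),1),((3,6),-1),((4,5),-1)] := rfl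
lemma tT23 : tauTable (2,3) = [((1,4),1),((2,3),1),((5,8),1),((6,7),1)] := rfl
lemma tZ23 : tauTableZ (2,3) = [((1,4),1),((2,3),1),((5,8),1),((6,7),1)] := rfl
lemma tT24 : tauTable (2,4) = [((1,3),-1),((2,4),1),((5,7),1),((6,8),-1)] := rfl
lemma tZ24 : tauTableZ (2,4) = [((1,3),-1),((2,4),1),((5,7),1),((6,8),-1)] := rfl
lemma tT25 : tauTable (2,5) = [((1,6),1),((2,5),1),((3,8),-1),((4,7),-1)] := rfl
lemma tZ25 : tauTableZ (2,5) = [((1,6),1),((2,5),1),((3,8),-1),((4,7),-1)] := rfl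
lemma tT26 : tauTable (2,6) = [((1,5),-1),((2,6),1),((3,7),-1),((4,8),1)] := rfl
lemma tZ26 : tauTableZ (2,6) = [((1,5),-1),((2,6),1),((3,7),-1),((4,8),1)] := rfl
lemma tT27 : tauTable (2,7) = [((1,8),1),((2,7),1),((3,6),1),((4,5),1)] := rfl
lemma tZ27 : tauTableZ (2,7) = [((1,8),1),((2,7),1),((3,6),1),((4,5),1)] := rfl
lemma tT28 : tauTable (2,8) = [((1,7),-1),((2,8),1),((3,5),1),((4,6),-1)] := rfl
lemma tZ28 : tauTableZ (2,8) = [((1,7),-1),((2,8),1),((3,5),1),((4,6),-1)] := rfl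
lemma tT34 : tauTable (3,4) = [((1,2),1),((3,4),1),((5,6),-1),((7,8),-1)] := rfl
lemma tZ34 : tauTableZ (3,4) = [((1,2),1),((3,4),1),((5,6),-1),((7,8),-1)] := rfl
lemma tT35 : tauTable (3,5) = [((1,7),1),((2,8),1),((3,5),1),((4,6),1)] := rfl
lemma tZ35 : tauTableZ (3,5) = [((1,7),1),((2,8),1),((3,5),1),((4,6),1)] := rfl
lemma tT36 : tauTable (3,6) = [((1,8),-1),((2,7),1),((3,6),1),((4,5),-1)] := rfl
lemma tZ36 : tauTableZ (3,6) = [((1,8),-1),((2,7),1),((3,6),1),((4,5),-1)] := rfl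
lemma tT37 : tauTable (3,7) = [((1,5),-1),((2,6),-1),((3,7),1),((4,8),1)] := rfl
lemma tZ37 : tauTableZ (3,7) = [((1,5),-1),((2,6),-1),((3,7),1),((4,8),1)] := rfl
lemma tT38 : tauTable (3,8) = [((1,6),1),((2,5),-1),((3,8),1),((4,7),-1)] := rfl
lemma tZ38 : tauTableZ (3,8) = [((1,6),1),((2,5),-1),((3,8),1),((4,7),-1)] := rfl
lemma tT45 : tauTable (4,5) = [((1,8),-1),((2,7),1),((3,6),-1),((4,5),1)] := rfl
lemma tZ45 : tauTableZ (4,5) = [((1,8),-1),((2,7),1),((3,6),-1),((4,5),1)] := rfl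
lemma tT46 : tauTable (4,6) = [((1,7),-1),((2,8),-1),((3,5),1),((4,6),1)] := rfl
lemma tZ46 : tauTableZ (4,6) = [((1,7),-1),((2,8),-1),((3,5),1),((4,6),1)] := rfl
lemma tT47 : tauTable (4,7) = [((1,6),1),((2,5),-1),((3,8),-1),((4,7),1)] := rfl
lemma tZ47 : tauTableZ (4,7) = [((1,6),1),((2,5),-1),((3,8),-1),((4,7),1)] := rfl
lemma tT48 : tauTable (4,8) = [((1,5),1),((2,6),1),((3,7),1),((4,8),1)] := rfl
lemma tZ48 : tauTableZ (4,8) = [((1,5),1),((2,6),1),((3,7),1),((4,8),1)] := rfl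
lemma tT56 : tauTable (5,6) = [((1,2),1),((3,4),-1),((5,6),1),((7,8),-1)] := rfl
lemma tZ56 : tauTableZ (5,6) = [((1,2),1),((3,4),-1),((5,6),1),((7,8),-1)] := rfl
lemma tT57 : tauTable (5,7) = [((1,3),1),((2,4),1),((5,7),1),((6,8),1)] := rfl
lemma tZ57 : tauTableZ (5,7) = [((1,3),1),((2,4),1),((5,7),1),((6,8),1)] := rfl
lemma tT58 : tauTable (5,8) = [((1,4),-1),((2,3),1),((5,8),1),((6,7),-1)] := rfl
lemma tZ58 : tauTableZ (5,8) = [((1,4),-1),((2,3),1),((5,8),1),((6,7),-1)] := rfl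
lemma tT67 : tauTable (6,7) = [((1,4),-1),((2,3),1),((5,8),-1),((6,7),1)] := rfl
lemma tZ67 : tauTableZ (6,7) = [((1,4),-1),((2,3),1),((5,8),-1),((6,7),1)] := rfl
lemma tT68 : tauTable (6,8) = [((1,3),-1),((2,4),-1),((5,7),1),((6,8),1)] := rfl
lemma tZ68 : tauTableZ (6,8) = [((1,3),-1),((2,4),-1),((5,7),1),((6,8),1)] := rfl
lemma tT78 : tauTable (7,8) = [((1,2),1),((3,4),-1),((5,6),-1),((7,8),1)] := rfl
lemma tZ78 : tauTableZ (7,8) = [((1,2),1),((3,4),-1),((5,6),-1),((7,8),1)] := rfl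

def colList : List (ℕ × ℕ) := [(1,2),(1,3),(1,4),(1,5),(1,6),(1,7),(1,8),(2,3),(2,4),(2,5),(2,6),(2,7),(2,8),(3,4),(3,5),(3,6),(3,7),(3,8),(4,5),(4,6),(4,7),(4,8),(5,6),(5,7),(5,8),(6,7),(6,8),(7,8)]

set_option maxHeartbeats 8000000 in
lemma coeff_cast : ∀ c ∈ colList, ∀ r : ℕ × ℕ, tauCoeff r c = ((tauCoeffZ r c : ℤ) : ℝ) := by
  intro c hc r
  simp only [colList, List.mem_cons, List.not_mem_nil, or_false] at hc
  rcases hc with rfl|rfl|rfl|rfl|rfl|rfl|rfl|rfl|rfl|rfl|rfl|rfl|rfl|rfl|rfl|rfl|rfl|rfl|rfl|rfl|rfl|rfl|rfl|rfl|rfl|rfl|rfl|rfl <;>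
  · simp only [tauCoeff, tauCoeffZ, tT12, tZ12, tT13, tZ13, tT14, tZ14, tT15, tZ15, tT16, tZ16, tT17, tZ17, tT18, tZ18, tT23, tZ23, tT24, tZ24, tT25, tZ25, tT26, tZ26, tT27, tZ27, tT28, tZ28, tT34, tZ34, tT35, tZ35, tT36, tZ36, tT37, tZ37, tT38, tZ38, tT45, tZ45, tT46, tZ46, tT47, tZ47, tT48, tZ48, tT56, tZ56, tT57, tZ57, tT58, tZ58, tT67, tZ67, tT68, tZ68, tT78, tZ78, List.filter_cons, List.filter_nil]
    split_ifs <;> norm_num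

lemma mem_colList : ∀ c : BivIdx, ((c.1.1 : ℕ) + 1, (c.1.2 : ℕ) + 1) ∈ colList := by decide

lemma tauM_eq : tauM = (2:ℝ)⁻¹ • (Mz.map fun z => ((z : ℤ) : ℝ)) := by
  ext r c
  simp only [tauM, Matrix.smul_apply, Matrix.map_apply, Mz, smul_eq_mul]
  rw [coeff_cast _ (mem_colList c)]
  norm_num

lemma hMzsq : Mz * Mz = (4:ℤ) • 1 := by decide

lemma hMztr : Matrix.trace Mz = 28 := by decide

lemma castMap : (Mz.map fun z => ((z : ℤ) : ℝ)) = Mz.map (Int.castRingHom ℝ) := rfl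

lemma tau_sq : tauM * tauM = 1 := by
  rw [tauM_eq, Matrix.smul_mul, Matrix.mul_smul, smul_smul, castMap, ← Matrix.map_mul, hMzsq]
  have h4 : ((4:ℤ) • (1 : Matrix BivIdx BivIdx ℤ)).map (Int.castRingHom ℝ) = (4:ℝ) • 1 := by
    ext i j
    rcases eq_or_ne i j with h | h <;>
      simp [Matrix.map_apply, ← Matrix.diagonal_ofNat, Matrix.diagonal_apply_eq,
        Matrix.diagonal_apply_ne, Matrix.one_apply, Matrix.smul_apply, h]
  rw [h4, smul_smul, show (2:ℝ)⁻¹ * 2⁻¹ * 4 = 1 by norm_num, one_smul]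

lemma tau_tr : Matrix.trace tauM = 14 := by
  rw [tauM_eq, Matrix.trace_smul]
  have h : Matrix.trace (Mz.map fun z => ((z : ℤ) : ℝ)) = ((Matrix.trace Mz : ℤ) : ℝ) := by
    rw [Matrix.trace, Matrix.trace, Int.cast_sum]
    simp [Matrix.diag, Matrix.map_apply]
  rw [h, hMztr]
  norm_num

lemma card_biv : Fintype.card BivIdx = 28 := by decide

lemma trace_mulVecLin (A : Matrix BivIdx BivIdx ℝ) :
    LinearMap.trace ℝ _ (A.mulVecLin) = Matrix.trace A := by
  rw [← Matrix.toLin'_apply', LinearMap.trace_eq_matrix_trace ℝ (Pi.basisFun ℝ BivIdx),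
    LinearMap.toMatrix_eq_toMatrix', LinearMap.toMatrix'_toLin']

lemma mulVec_sq (v : BivIdx → ℝ) : tauM.mulVec (tauM.mulVec v) = v := by
  rw [Matrix.mulVec_mulVec, tau_sq, Matrix.one_mulVec]

def Pp : ((BivIdx → ℝ) →ₗ[ℝ] (BivIdx → ℝ)) := (2⁻¹:ℝ) • (LinearMap.id + tauM.mulVecLin)

def Pm : ((BivIdx → ℝ) →ₗ[ℝ] (BivIdx → ℝ)) := (2⁻¹:ℝ) • (LinearMap.id - tauM.mulVecLin)

lemma projP : LinearMap.IsProj (LinearMap.ker ((tauM - 1).mulVecLin)) Pp := by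
  constructor
  · intro x
    simp only [LinearMap.mem_ker, Matrix.mulVecLin_apply, Pp, LinearMap.smul_apply,
      LinearMap.add_apply, LinearMap.id_apply, Matrix.sub_mulVec, Matrix.mulVec_smul,
      Matrix.mulVec_add, mulVec_sq, Matrix.one_mulVec]
    module
  · intro x hx
    have hfix : tauM.mulVec x = x := by
      have h := LinearMap.mem_ker.mp hx
      rw [Matrix.mulVecLin_apply, Matrix.sub_mulVec, Matrix.one_mulVec, sub_eq_zero] at h
      exact h
    simp only [Pp, LinearMap.smul_apply, LinearMap.add_apply, LinearMap.id_apply,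
      Matrix.mulVecLin_apply, hfix]
    module

lemma projM : LinearMap.IsProj (LinearMap.ker ((tauM + 1).mulVecLin)) Pm := by
  constructor
  · intro x
    simp only [LinearMap.mem_ker, Matrix.mulVecLin_apply, Pm, LinearMap.smul_apply,
      LinearMap.sub_apply, LinearMap.id_apply, Matrix.add_mulVec, Matrix.mulVec_smul,
      Matrix.mulVec_sub, mulVec_sq, Matrix.one_mulVec]
    module
  · intro x hx
    have hfix : tauM.mulVec x = -x := by
      have h := LinearMap.mem_ker.mp hx
      rw [Matrix.mulVecLin_apply, Matrix.add_mulVec, Matrix.one_mulVec,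
        add_eq_zero_iff_eq_neg] at h
      exact h
    simp only [Pm, LinearMap.smul_apply, LinearMap.sub_apply, LinearMap.id_apply,
      Matrix.mulVecLin_apply, hfix]
    module

lemma trPp : LinearMap.trace ℝ (BivIdx → ℝ) Pp = 21 := by
  simp only [Pp, map_smul, map_add, LinearMap.trace_id, trace_mulVecLin, tau_tr,
    Module.finrank_pi, card_biv, smul_eq_mul]
  norm_num

lemma trPm : LinearMap.trace ℝ (BivIdx → ℝ) Pm = 7 := by
  simp only [Pm, map_smul, map_sub, LinearMap.trace_id, trace_mulVecLin, tau_tr,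
    Module.finrank_pi, card_biv, smul_eq_mul]
  norm_num

/-- τ₊² = Id, its +1-eigenspace has dimension 21 and its -1-eigenspace has dimension 7. -/
theorem tau_involution_eigenspace_dims :
    tauM * tauM = 1 ∧
    Module.finrank ℝ (LinearMap.ker ((tauM - 1).mulVecLin)) = 21 ∧
    Module.finrank ℝ (LinearMap.ker ((tauM + 1).mulVecLin)) = 7 := by
  refine ⟨tau_sq, ?_, ?_⟩
  · have h := projP.trace
    rw [trPp] at h
    exact_mod_cast h.symm
  · have h := projM.trace
    rw [trPm] at h
    exact_mod_cast h.symm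

end
end

section
/- Let Ω = Σ_{2≤i<j≤8} f_{i,j} ∧ f_{i,j} be the 4-form on ℝ⁸ built from the 21 explicit 2-forms f_{i,j} listed in the paper (e.g., f_{2,3} = dx₁∧dx₄ + dx₂∧dx₃ + dx₅∧dx₈ + dx₆∧dx₇, etc.). Then Ω ∧ Ω = 504 · dx₁∧dx₂∧⋯∧dx₈; in particular Ω is nondegenerate. -/
open ExteriorAlgebra

set_option maxHeartbeats 1000000

noncomputable section

/-- The exterior algebra of ℝ⁸. -/
abbrev Ext8 := ExteriorAlgebra ℝ (Fin 8 → ℝ)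

open Fin.NatCast in
/-- dx_n, 1-indexed (n = 1,…,8). -/
def d (n : ℕ) : Ext8 := ι ℝ (Pi.single ((n - 1 : ℕ) : Fin 8) (1 : ℝ))

/-- The 2-forms f_{i,j}, 2 ≤ i < j ≤ 8, from the paper. -/
def fm : ℕ → ℕ → Ext8 := fun i j =>
  match i, j with
  | 2, 3 => d 1 * d 4 + d 2 * d 3 + d 5 * d 8 + d 6 * d 7
  | 2, 4 => -(d 1 * d 3) + d 2 * d 4 + d 5 * d 7 - d 6 * d 8
  | 2, 5 => d 1 * d 6 + d 2 * d 5 - d 3 * d 8 - d 4 * d 7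
  | 2, 6 => -(d 1 * d 5) + d 2 * d 6 - d 3 * d 7 + d 4 * d 8
  | 2, 7 => d 1 * d 8 + d 2 * d 7 + d 3 * d 6 + d 4 * d 5
  | 2, 8 => -(d 1 * d 7) + d 2 * d 8 + d 3 * d 5 - d 4 * d 6
  | 3, 4 => d 1 * d 2 + d 3 * d 4 - d 5 * d 6 - d 7 * d 8
  | 3, 5 => d 1 * d 7 + d 2 * d 8 + d 3 * d 5 + d 4 * d 6
  | 3, 6 => -(d 1 * d 8) + d 2 * d 7 + d 3 * d 6 - d 4 * d 5
  | 3, 7 => -(d 1 * d 5) - d 2 * d 6 + d 3 * d 7 + d 4 * d 8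
  | 3, 8 => d 1 * d 6 - d 2 * d 5 + d 3 * d 8 - d 4 * d 7
  | 4, 5 => -(d 1 * d 8) + d 2 * d 7 - d 3 * d 6 + d 4 * d 5
  | 4, 6 => -(d 1 * d 7) - d 2 * d 8 + d 3 * d 5 + d 4 * d 6
  | 4, 7 => d 1 * d 6 - d 2 * d 5 - d 3 * d 8 + d 4 * d 7
  | 4, 8 => d 1 * d 5 + d 2 * d 6 + d 3 * d 7 + d 4 * d 8
  | 5, 6 => d 1 * d 2 - d 3 * d 4 + d 5 * d 6 - d 7 * d 8
  | 5, 7 => d 1 * d 3 + d 2 * d 4 + d 5 * d 7 + d 6 * d 8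
  | 5, 8 => -(d 1 * d 4) + d 2 * d 3 + d 5 * d 8 - d 6 * d 7
  | 6, 7 => -(d 1 * d 4) + d 2 * d 3 - d 5 * d 8 + d 6 * d 7
  | 6, 8 => -(d 1 * d 3) - d 2 * d 4 + d 5 * d 7 + d 6 * d 8
  | 7, 8 => d 1 * d 2 - d 3 * d 4 - d 5 * d 6 + d 7 * d 8
  | _, _ => 0

/-- The list of pairs 2 ≤ i < j ≤ 8. -/
def pairList : List (ℕ × ℕ) :=
  [(2,3),(2,4),(2,5),(2,6),(2,7),(2,8),(3,4),(3,5),(3,6),(3,7),(3,8),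
   (4,5),(4,6),(4,7),(4,8),(5,6),(5,7),(5,8),(6,7),(6,8),(7,8)]

/-- The Spin(7)-invariant 4-form Ω = Σ_{2≤i<j≤8} f_{i,j} ∧ f_{i,j}. -/
def Omega : Ext8 := (pairList.map (fun p => fm p.1 p.2 * fm p.1 p.2)).sum

/-! Expanding the 21 squares, all but fourteen of the monomials `dx_a ∧ dx_b ∧ dx_c ∧ dx_d` cancel and
the survivors all carry coefficient `∓6`: `Ω = -6 Φ` with `Φ` the Cayley form. The index sets of
these fourteen monomials meet pairwise in two indices, except for the seven complementary pairs, so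
only those pairs survive in `Φ ∧ Φ`, each twice and with sign `+1`. Hence `Φ ∧ Φ = 14 vol` and
`Ω ∧ Ω = 36 · 14 vol = 504 vol`. -/

section Anticommute

variable {R M : Type*} [CommRing R] [AddCommGroup M] [Module R M]

theorem ExteriorAlgebra.ι_mul_ι_eq_neg (x y : M) : ι R x * ι R y = -(ι R y * ι R x) :=
  eq_neg_of_add_eq_zero_left (ι_add_mul_swap x y)

theorem ExteriorAlgebra.ι_mul_ι_mul_self (x : M) (a : ExteriorAlgebra R M) :
    ι R x * (ι R x * a) = 0 := by
  rw [← mul_assoc, ι_sq_zero, zero_mul]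

theorem ExteriorAlgebra.ι_mul_ι_mul_eq_neg (x y : M) (a : ExteriorAlgebra R M) :
    ι R x * (ι R y * a) = -(ι R y * (ι R x * a)) := by
  rw [← mul_assoc, ι_mul_ι_eq_neg, neg_mul, mul_assoc]

end Anticommute

theorem d_mul_self (n : ℕ) : d n * d n = 0 := ι_sq_zero _

theorem d_mul_d_mul_self (n : ℕ) (a : Ext8) : d n * (d n * a) = 0 := ι_mul_ι_mul_self _ a

-- `n < m` only orients the rewrite, so that `simp` sorts the factors of a monomial.
theorem d_mul_d_of_lt {m n : ℕ} (_ : n < m) : d m * d n = -(d n * d m) := ι_mul_ι_eq_neg _ _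

theorem d_mul_d_mul_of_lt {m n : ℕ} (_ : n < m) (a : Ext8) :
    d m * (d n * a) = -(d n * (d m * a)) :=
  ι_mul_ι_mul_eq_neg _ _ a

def cayleyForm : Ext8 :=
  d 1 * d 2 * d 3 * d 4 + d 1 * d 2 * d 5 * d 6 + d 1 * d 2 * d 7 * d 8 + d 1 * d 3 * d 5 * d 7
  - d 1 * d 3 * d 6 * d 8 - d 1 * d 4 * d 5 * d 8 - d 1 * d 4 * d 6 * d 7 - d 2 * d 3 * d 5 * d 8
  - d 2 * d 3 * d 6 * d 7 - d 2 * d 4 * d 5 * d 7 + d 2 * d 4 * d 6 * d 8 + d 3 * d 4 * d 5 * d 6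
  + d 3 * d 4 * d 7 * d 8 + d 5 * d 6 * d 7 * d 8

theorem Omega_eq_neg_six_smul_cayleyForm : Omega = (-6 : ℝ) • cayleyForm := by
  simp only [Omega, pairList, fm, cayleyForm, List.map_cons, List.map_nil, List.sum_cons,
    List.sum_nil, sub_eq_add_neg, mul_add, add_mul, neg_mul, mul_neg, mul_assoc]
  simp only [d_mul_self, d_mul_d_of_lt, d_mul_d_mul_of_lt, mul_neg, neg_neg, mul_zero, neg_zero,
    add_zero, zero_add, Nat.reduceLT]
  module

theorem cayleyForm_mul_self :
    cayleyForm * cayleyForm = (14 : ℝ) • (d 1 * d 2 * d 3 * d 4 * d 5 * d 6 * d 7 * d 8) := by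
  simp only [cayleyForm, sub_eq_add_neg, mul_add, add_mul, neg_mul, mul_neg, mul_assoc]
  simp only [d_mul_self, d_mul_d_mul_self, d_mul_d_of_lt, d_mul_d_mul_of_lt, mul_neg, neg_neg,
    mul_zero, neg_zero, add_zero, zero_add, Nat.reduceLT]
  module

/-- Ω ∧ Ω = 504 · dx₁∧dx₂∧⋯∧dx₈; in particular Ω is nondegenerate. -/
theorem Omega_wedge_Omega :
    Omega * Omega = (504 : ℝ) • (d 1 * d 2 * d 3 * d 4 * d 5 * d 6 * d 7 * d 8) := by
  rw [Omega_eq_neg_six_smul_cayleyForm, smul_mul_smul_comm, cayleyForm_mul_self, smul_smul]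
  norm_num

end
end
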